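/- arXiv:1803.04327 — 4 statements merged into one kernel-verified Lean document; each statement's English description precedes it below -/
import Mathlib

section
/- Let G be a proper interval graph with intervals I_1 < ... < I_n ordered by left endpoints, let U ⊆ V(G), and let C, C' be two components of G[U] such that every interval of C is to the left of every interval of C'. If I is an interval with max(C) < I < min(C') (in the left-endpoint order) whose vertex has at least k neighbors in U in G, and every interval of U is associated with C or C' or lies entirely left of C or entirely right of C', then I intersects at least k intervals from C ∪ C'. -/
/-- The intersection graph of a proper interval model. -/
def interGraph (n : ℕ) (a b : Fin n → ℝ) : SimpleGraph (Fin n) where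
  Adj i j := i ≠ j ∧ (Set.Icc (a i) (b i) ∩ Set.Icc (a j) (b j)).Nonempty
  symm := ⟨fun i j h => ⟨h.1.symm, Set.inter_comm _ _ ▸ h.2⟩⟩
  loopless := ⟨fun i h => h.1 rfl⟩

/-
In a proper model the right endpoints are ordered like the left ones, so a point common to
two intervals lies in every interval between them. Hence a neighbour of `i` in `U` lying
beyond a vertex of `C` (or of `C'`) as seen from `i` meets that vertex, and so belongs to the
same component. By the side condition every neighbour of `i` in `U` is therefore in `C ∪ C'`.
-/

namespace interGraph

variable {n : ℕ} {a b : Fin n → ℝ}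

theorem monotone_right (hmono : StrictMono a)
    (hproper : ∀ i j : Fin n, i ≠ j → ¬(Set.Icc (a i) (b i) ⊆ Set.Icc (a j) (b j))) :
    Monotone b := by
  refine monotone_iff_forall_lt.mpr fun i j hij => ?_
  by_contra! hb
  exact hproper j i hij.ne' fun x hx => ⟨(hmono hij).le.trans hx.1, hx.2.trans hb.le⟩

theorem mem_Icc_of_mem_uIcc (ha : Monotone a) (hb : Monotone b) {i j m : Fin n} {x : ℝ}
    (hm : m ∈ Set.uIcc i j) (hxi : x ∈ Set.Icc (a i) (b i)) (hxj : x ∈ Set.Icc (a j) (b j)) :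
    x ∈ Set.Icc (a m) (b m) := by
  rcases Set.mem_uIcc.mp hm with ⟨him, hmj⟩ | ⟨hjm, hmi⟩
  · exact ⟨(ha hmj).trans hxj.1, hxi.2.trans (hb him)⟩
  · exact ⟨(ha hmi).trans hxi.1, hxj.2.trans (hb hjm)⟩

theorem mem_component_of_mem_uIcc (ha : Monotone a) (hb : Monotone b)
    {U : Set (Fin n)} (cc : ((interGraph n a b).induce U).ConnectedComponent)
    {i j m : Fin n} (hmC : m ∈ Subtype.val '' cc.supp) (hjU : j ∈ U)
    (hm : m ∈ Set.uIcc i j)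
    (hij : (Set.Icc (a i) (b i) ∩ Set.Icc (a j) (b j)).Nonempty) :
    j ∈ Subtype.val '' cc.supp := by
  obtain ⟨⟨m, hmU⟩, hmcc, rfl⟩ := hmC
  by_cases hjm : j = m
  · subst hjm
    exact ⟨⟨j, hmU⟩, hmcc, rfl⟩
  obtain ⟨x, hxi, hxj⟩ := hij
  have hadj : ((interGraph n a b).induce U).Adj ⟨m, hmU⟩ ⟨j, hjU⟩ :=
    ⟨Ne.symm hjm, x, mem_Icc_of_mem_uIcc ha hb hm hxi hxj, hxj⟩
  refine ⟨⟨j, hjU⟩, ?_, rfl⟩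
  rw [SimpleGraph.ConnectedComponent.mem_supp_iff] at hmcc ⊢
  rw [← hmcc]
  exact SimpleGraph.ConnectedComponent.sound hadj.symm.reachable

end interGraph

theorem stmt_10_general (n k : ℕ) (a b : Fin n → ℝ)
    (hmono : StrictMono a)
    (hproper : ∀ i j : Fin n, i ≠ j →
      ¬(Set.Icc (a i) (b i) ⊆ Set.Icc (a j) (b j)))
    (U : Set (Fin n)) (C C' : Set (Fin n))
    (hC : ∃ cc : ((interGraph n a b).induce U).ConnectedComponent,
      C = Subtype.val '' cc.supp)
    (hC' : ∃ cc : ((interGraph n a b).induce U).ConnectedComponent,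
      C' = Subtype.val '' cc.supp)
    (mC : Fin n) (hmC : mC ∈ C)
    (m' : Fin n) (hm' : m' ∈ C')
    (i : Fin n) (hi1 : mC < i) (hi2 : i < m')
    (hnb : k ≤ {j | j ∈ U ∧ (interGraph n a b).Adj i j}.ncard)
    (hside : ∀ j ∈ U, j ∈ C ∨ j ∈ C' ∨ (∀ c ∈ C, j < c) ∨ (∀ c' ∈ C', c' < j)) :
    k ≤ {j | j ∈ C ∪ C' ∧
      (Set.Icc (a i) (b i) ∩ Set.Icc (a j) (b j)).Nonempty}.ncard := by
  obtain ⟨cc, rfl⟩ := hC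
  obtain ⟨cc', rfl⟩ := hC'
  have ha := hmono.monotone
  have hb := interGraph.monotone_right hmono hproper
  refine hnb.trans (Set.ncard_le_ncard ?_)
  rintro j ⟨hjU, -, hij⟩
  refine ⟨?_, hij⟩
  rcases hside j hjU with hj | hj | hj | hj
  · exact Or.inl hj
  · exact Or.inr hj
  · have hjC := interGraph.mem_component_of_mem_uIcc ha hb cc hmC hjU
      (Set.mem_uIcc.mpr (Or.inr ⟨(hj mC hmC).le, hi1.le⟩)) hij
    exact absurd (hj j hjC) (lt_irrefl j)
  · have hjC' := interGraph.mem_component_of_mem_uIcc ha hb cc' hm' hjU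
      (Set.mem_uIcc.mpr (Or.inl ⟨hi2.le, (hj m' hm').le⟩)) hij
    exact absurd (hj j hjC') (lt_irrefl j)

/-- An interval strictly between two consecutive components C, C' of G[U], whose
vertex has at least k neighbors in U, intersects at least k intervals of C ∪ C'. -/
theorem stmt_10 (n k : ℕ) (hk : 0 < k) (a b : Fin n → ℝ) (hab : ∀ i, a i ≤ b i)
    (hmono : StrictMono a)
    (hproper : ∀ i j : Fin n, i ≠ j →
      ¬(Set.Icc (a i) (b i) ⊆ Set.Icc (a j) (b j)))
    (U : Set (Fin n)) (C C' : Set (Fin n))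
    (hC : ∃ cc : ((interGraph n a b).induce U).ConnectedComponent,
      C = Subtype.val '' cc.supp)
    (hC' : ∃ cc : ((interGraph n a b).induce U).ConnectedComponent,
      C' = Subtype.val '' cc.supp)
    (hCC' : ∀ c ∈ C, ∀ c' ∈ C', c < c')
    (mC : Fin n) (hmC : mC ∈ C) (hmCmax : ∀ c ∈ C, c ≤ mC)
    (m' : Fin n) (hm' : m' ∈ C') (hm'min : ∀ c' ∈ C', m' ≤ c')
    (i : Fin n) (hi1 : mC < i) (hi2 : i < m')
    (hnb : k ≤ {j | j ∈ U ∧ (interGraph n a b).Adj i j}.ncard)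
    (hside : ∀ j ∈ U, j ∈ C ∨ j ∈ C' ∨ (∀ c ∈ C, j < c) ∨ (∀ c' ∈ C', c' < j)) :
    k ≤ {j | j ∈ C ∪ C' ∧
      (Set.Icc (a i) (b i) ∩ Set.Icc (a j) (b j)).Nonempty}.ncard :=
  stmt_10_general n k a b hmono hproper U C C' hC hC' mC hmC m' hm' i hi1 hi2 hnb hside
end

section
/- Let G be a proper interval graph with proper interval model I_1 < ... < I_n (ordered by left endpoints), let U be a total k-dominating set of G, and let C be a component of G[U] whose vertices correspond to intervals I_{j_1} < ... < I_{j_p}. If u ∈ V(G) has its interval I satisfying I_{j_1} ≤ I ≤ I_{j_p}, then all neighbors of u that belong to U belong to C. -/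
namespace SimpleGraph

variable {α : Type*} [LinearOrder α]

def IsUmbrellaOrdering (G : SimpleGraph α) : Prop :=
  ∀ ⦃i v j : α⦄, i < v → v < j → G.Adj i j → G.Adj i v ∧ G.Adj v j

namespace IsUmbrellaOrdering

variable {G : SimpleGraph α}

theorem adj_of_lt_of_le (hG : G.IsUmbrellaOrdering) {w x u : α} (hwx : w < x) (hxu : x ≤ u)
    (h : G.Adj w u) : G.Adj w x := by
  rcases hxu.eq_or_lt with rfl | hxu
  · exact h
  · exact (hG hwx hxu h).1

theorem adj_of_le_of_lt (hG : G.IsUmbrellaOrdering) {u x w : α} (hux : u ≤ x) (hxw : x < w)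
    (h : G.Adj u w) : G.Adj x w := by
  rcases hux.eq_or_lt with rfl | hux
  · exact h
  · exact (hG hux hxw h).2

theorem induce (hG : G.IsUmbrellaOrdering) (U : Set α) : (G.induce U).IsUmbrellaOrdering :=
  fun _ _ _ hiv hvj h => hG hiv hvj h

theorem reachable_of_le_of_le (hG : G.IsUmbrellaOrdering) {x y v : α} (hxy : G.Reachable x y)
    (hxv : x ≤ v) (hvy : v ≤ y) : G.Reachable x v := by
  obtain ⟨p⟩ := hxy
  induction p with
  | nil => rw [le_antisymm hvy hxv]
  | @cons x q y hxq _ ih =>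
    rcases le_or_gt q v with hqv | hvq
    · exact hxq.reachable.trans (ih hqv hvy)
    · rcases hxv.eq_or_lt with rfl | hxv
      · rfl
      · exact (hG.adj_of_lt_of_le hxv hvq.le hxq).reachable

theorem mem_supp_of_le_of_le (hG : G.IsUmbrellaOrdering) {c : G.ConnectedComponent} {x y v : α}
    (hx : x ∈ c.supp) (hy : y ∈ c.supp) (hxv : x ≤ v) (hvy : v ≤ y) : v ∈ c.supp := by
  rw [ConnectedComponent.mem_supp_iff] at hx ⊢
  rw [← hx]
  exact ConnectedComponent.sound
    (hG.reachable_of_le_of_le (c.reachable_of_mem_supp hx hy) hxv hvy).symm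

theorem mem_supp_induce_of_adj (hG : G.IsUmbrellaOrdering) {U : Set α}
    {c : (G.induce U).ConnectedComponent} {x y : U} (hx : x ∈ c.supp) (hy : y ∈ c.supp)
    {u w : α} (hxu : x ≤ u) (huy : u ≤ y) (hw : w ∈ U) (huw : G.Adj u w) :
    (⟨w, hw⟩ : U) ∈ c.supp := by
  rcases lt_or_ge w x with hwx | hxw
  · have hwx' : (G.induce U).Adj ⟨w, hw⟩ x := hG.adj_of_lt_of_le hwx hxu huw.symm
    exact (c.mem_supp_congr_adj hwx').2 hx
  rcases le_or_gt w y with hwy | hyw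
  · exact (hG.induce U).mem_supp_of_le_of_le hx hy hxw hwy
  · have hyw' : (G.induce U).Adj y ⟨w, hw⟩ := hG.adj_of_le_of_lt huy hyw huw
    exact (c.mem_supp_congr_adj hyw').1 hy

end IsUmbrellaOrdering

end SimpleGraph

theorem monotone_of_Icc_not_subset {ι β : Type*} [Preorder ι] [LinearOrder β] {a b : ι → β}
    (ha : Monotone a) (hproper : ∀ i j, i ≠ j → ¬Set.Icc (a i) (b i) ⊆ Set.Icc (a j) (b j)) :
    Monotone b := by
  intro i j hij
  by_contra! hji
  exact hproper j i (ne_of_apply_ne b hji.ne) (Set.Icc_subset_Icc (ha hij) hji.le)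

section interGraph

variable {n : ℕ} {a b : Fin n → ℝ}

theorem interGraph_adj_iff_of_lt (hab : ∀ i, a i ≤ b i) (ha : Monotone a) {i j : Fin n}
    (hij : i < j) : (interGraph n a b).Adj i j ↔ a j ≤ b i := by
  constructor
  · rintro ⟨-, x, hxi, hxj⟩
    exact hxj.1.trans hxi.2
  · intro h
    exact ⟨hij.ne, a j, ⟨ha hij.le, h⟩, le_rfl, hab j⟩

theorem interGraph_isUmbrellaOrdering (hab : ∀ i, a i ≤ b i) (ha : Monotone a)
    (hproper : ∀ i j : Fin n, i ≠ j → ¬Set.Icc (a i) (b i) ⊆ Set.Icc (a j) (b j)) :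
    (interGraph n a b).IsUmbrellaOrdering := by
  have hb := monotone_of_Icc_not_subset ha hproper
  intro i v j hiv hvj hij
  rw [interGraph_adj_iff_of_lt hab ha (hiv.trans hvj)] at hij
  rw [interGraph_adj_iff_of_lt hab ha hiv, interGraph_adj_iff_of_lt hab ha hvj]
  exact ⟨(ha hvj.le).trans hij, hij.trans (hb hiv.le)⟩

end interGraph

theorem stmt_11_general (n : ℕ) (a b : Fin n → ℝ) (hab : ∀ i, a i ≤ b i)
    (hmono : StrictMono a)
    (hproper : ∀ i j : Fin n, i ≠ j →
      ¬(Set.Icc (a i) (b i) ⊆ Set.Icc (a j) (b j)))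
    (U : Set (Fin n)) (C : Set (Fin n))
    (hC : ∃ cc : ((interGraph n a b).induce U).ConnectedComponent,
      C = Subtype.val '' cc.supp)
    (j1 jp : Fin n) (hj1 : j1 ∈ C) (hjp : jp ∈ C)
    (u : Fin n) (hu1 : j1 ≤ u) (hu2 : u ≤ jp) :
    ∀ w ∈ U, (interGraph n a b).Adj u w → w ∈ C := by
  obtain ⟨c, rfl⟩ := hC
  obtain ⟨x, hx, rfl⟩ := hj1
  obtain ⟨y, hy, rfl⟩ := hjp
  intro w hw huw
  have hG := interGraph_isUmbrellaOrdering hab hmono.monotone hproper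
  exact ⟨⟨w, hw⟩, hG.mem_supp_induce_of_adj hx hy hu1 hu2 hw huw, rfl⟩

/-- If the interval of u lies between the leftmost and rightmost interval of a
component C of G[U] (U a total k-dominating set), then all neighbors of u
belonging to U belong to C. -/
theorem stmt_11 (n k : ℕ) (hk : 0 < k) (a b : Fin n → ℝ) (hab : ∀ i, a i ≤ b i)
    (hmono : StrictMono a)
    (hproper : ∀ i j : Fin n, i ≠ j →
      ¬(Set.Icc (a i) (b i) ⊆ Set.Icc (a j) (b j)))
    (U : Set (Fin n))
    (htd : ∀ v : Fin n, k ≤ {w | w ∈ U ∧ (interGraph n a b).Adj v w}.ncard)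
    (C : Set (Fin n))
    (hC : ∃ cc : ((interGraph n a b).induce U).ConnectedComponent,
      C = Subtype.val '' cc.supp)
    (j1 jp : Fin n) (hj1 : j1 ∈ C) (hj1min : ∀ c ∈ C, j1 ≤ c)
    (hjp : jp ∈ C) (hjpmax : ∀ c ∈ C, c ≤ jp)
    (u : Fin n) (hu1 : j1 ≤ u) (hu2 : u ≤ jp) :
    ∀ w ∈ U, (interGraph n a b).Adj u w → w ∈ C :=
  stmt_11_general n a b hab hmono hproper U C hC j1 jp hj1 hjp u hu1 hu2
end

section
/- Let G be a proper interval graph with intervals ordered by left endpoints, let U be a total k-dominating set, let C be a component of G[U] with intervals I_{j_1} < ... < I_{j_p} where p ≥ 2k, and let q ∈ {1, ..., p-2k+1}. Then every interval I of G with I_{j_{q+k-1}} ≤ I ≤ I_{j_{q+k}} intersects at least k intervals from the set {I_{j_q}, I_{j_{q+1}}, ..., I_{j_{q+2k-1}}} \ {I}. -/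
/-!
In a proper interval model both endpoint sequences are monotone, so an interval lying between
two intersecting intervals meets both of them. Consecutive members `j r`, `j (r+1)` of the
component intersect, since some edge of `G[U]` must cross the cut of the component after `j r`
and it would otherwise have to span the gap. Hence no vertex of `U` lies strictly between
them, so every vertex of `U` between two members of the component is itself a member.

Now let `I` lie between the two middle intervals of the window. If `I` has a neighbour to the
left of the window, `I` meets the first `k + 1` window intervals; if it has one to the right,
it meets the last `k + 1`. At most one of these is `I` itself. Otherwise all neighbours of `I`
in `U` — at least `k` of them — lie within the window, hence are window intervals.
-/

open Set

theorem monotone_right_of_proper {ι α : Type*} [Preorder ι] [LinearOrder α] {a b : ι → α}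
    (ha : Monotone a) (hproper : ∀ u v, u ≠ v → ¬Icc (a u) (b u) ⊆ Icc (a v) (b v)) :
    Monotone b := by
  intro u v huv
  by_contra! hlt
  exact hproper v u (by rintro rfl; exact lt_irrefl _ hlt) (Icc_subset_Icc (ha huv) hlt.le)

theorem Icc_inter_Icc_nonempty_iff {α : Type*} [LinearOrder α] {a₁ b₁ a₂ b₂ : α}
    (h₁ : a₁ ≤ b₁) (h₂ : a₂ ≤ b₂) :
    (Icc a₁ b₁ ∩ Icc a₂ b₂).Nonempty ↔ a₁ ≤ b₂ ∧ a₂ ≤ b₁ := by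
  rw [Icc_inter_Icc, nonempty_Icc]
  simp [h₁, h₂, and_comm]

section IntervalGraph

variable {n : ℕ} {a b : Fin n → ℝ}

theorem interGraph_adj_iff_of_le (hab : ∀ i, a i ≤ b i) (ha : Monotone a) {u v : Fin n}
    (huv : u ≤ v) : (interGraph n a b).Adj u v ↔ u ≠ v ∧ a v ≤ b u := by
  change u ≠ v ∧ _ ↔ _
  rw [Icc_inter_Icc_nonempty_iff (hab u) (hab v)]
  exact and_congr_right fun _ => and_iff_right ((ha huv).trans (hab v))

theorem interGraph_adj_of_le_of_le_left (hab : ∀ i, a i ≤ b i) (ha : Monotone a)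
    {u v w : Fin n} (huv : u ≤ v) (hvw : v ≤ w) (huv' : u ≠ v)
    (h : (interGraph n a b).Adj u w) : (interGraph n a b).Adj u v := by
  rw [interGraph_adj_iff_of_le hab ha (huv.trans hvw)] at h
  exact (interGraph_adj_iff_of_le hab ha huv).2 ⟨huv', (ha hvw).trans h.2⟩

theorem interGraph_adj_of_le_of_le_right (hab : ∀ i, a i ≤ b i) (ha : Monotone a)
    (hb : Monotone b) {u v w : Fin n} (huv : u ≤ v) (hvw : v ≤ w) (hvw' : v ≠ w)
    (h : (interGraph n a b).Adj u w) : (interGraph n a b).Adj v w := by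
  rw [interGraph_adj_iff_of_le hab ha (huv.trans hvw)] at h
  exact (interGraph_adj_iff_of_le hab ha hvw).2 ⟨hvw', h.2.trans (hb huv)⟩

variable {p : ℕ} {j : Fin p → Fin n}

theorem forall_adj_of_neighbor_le (hab : ∀ i, a i ≤ b i) (ha : Monotone a) (hb : Monotone b)
    (hj : Monotone j) {r s : Fin p} (hrs : (s : ℕ) = r + 1)
    (hmid : (interGraph n a b).Adj (j r) (j s)) {i w : Fin n} (hri : j r ≤ i) (his : i ≤ j s)
    (hiw : (interGraph n a b).Adj i w) {l : Fin p} (hwl : w ≤ j l) :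
    ∀ m, l ≤ m → m ≤ s → j m ≠ i → (interGraph n a b).Adj i (j m) := by
  intro m hlm hms hmi
  rcases eq_or_ne m s with rfl | hne
  · exact interGraph_adj_of_le_of_le_right hab ha hb hri his hmi.symm hmid
  · have hmr : m ≤ r := by rw [Fin.le_def] at hms ⊢; rw [Ne, Fin.ext_iff] at hne; omega
    exact (interGraph_adj_of_le_of_le_right hab ha hb (hwl.trans (hj hlm)) ((hj hmr).trans hri)
      hmi hiw.symm).symm

theorem forall_adj_of_neighbor_ge (hab : ∀ i, a i ≤ b i) (ha : Monotone a)
    (hj : Monotone j) {r s : Fin p} (hrs : (s : ℕ) = r + 1)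
    (hmid : (interGraph n a b).Adj (j r) (j s)) {i w : Fin n} (hri : j r ≤ i) (his : i ≤ j s)
    (hiw : (interGraph n a b).Adj i w) {u : Fin p} (hwu : j u ≤ w) :
    ∀ m, r ≤ m → m ≤ u → j m ≠ i → (interGraph n a b).Adj i (j m) := by
  intro m hrm hmu hmi
  rcases eq_or_ne m r with rfl | hne
  · exact (interGraph_adj_of_le_of_le_left hab ha hri his hmi hmid).symm
  · have hsm : s ≤ m := by rw [Fin.le_def] at hrm ⊢; rw [Ne, Fin.ext_iff] at hne; omega
    exact interGraph_adj_of_le_of_le_left hab ha (his.trans (hj hsm)) ((hj hmu).trans hwu)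
      hmi.symm hiw

end IntervalGraph

theorem Monotone.exists_succ_mem_Ioo_of_notMem_range {β : Type*} [LinearOrder β] {p : ℕ}
    {j : Fin p → β} (hj : Monotone j) {l u : Fin p} {w : β} (hl : j l ≤ w) (hu : w ≤ j u)
    (hw : w ∉ range j) : ∃ r s : Fin p, (s : ℕ) = r + 1 ∧ w ∈ Ioo (j r) (j s) := by
  classical
  obtain ⟨r, hrw, hrmax⟩ := (Finset.univ.filter fun m => j m ≤ w).exists_max_image id
    ⟨l, by simpa using hl⟩
  simp only [Finset.mem_filter, Finset.mem_univ, true_and, id] at hrw hrmax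
  have hrw' : j r < w := lt_of_le_of_ne hrw fun h => hw ⟨r, h⟩
  have hru : (r : ℕ) < u := lt_of_not_ge fun hur => (hrw'.trans_le hu).not_ge (hj hur)
  refine ⟨r, ⟨r + 1, by omega⟩, rfl, hrw', lt_of_not_ge fun hsw => ?_⟩
  have := Fin.le_def.1 (hrmax _ hsw)
  dsimp only at this
  omega

section Component

variable {n p : ℕ} {a b : Fin n → ℝ} {U : Set (Fin n)} {j : Fin p → Fin n}
  {cc : ((interGraph n a b).induce U).ConnectedComponent}

theorem mem_range_of_adj (hC : range j = Subtype.val '' cc.supp) {m : Fin p} {w : Fin n}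
    (hw : w ∈ U) (h : (interGraph n a b).Adj (j m) w) : w ∈ range j := by
  obtain ⟨x, hx, hxm⟩ : j m ∈ Subtype.val '' cc.supp := hC ▸ mem_range_self m
  rw [← hxm] at h
  rw [hC]
  exact ⟨⟨w, hw⟩, (cc.mem_supp_congr_adj (v := x) (w := ⟨w, hw⟩) h).1 hx, rfl⟩

theorem adj_of_succ (hab : ∀ i, a i ≤ b i) (ha : Monotone a) (hb : Monotone b)
    (hj : StrictMono j) (hC : range j = Subtype.val '' cc.supp) {r s : Fin p}
    (hrs : (s : ℕ) = r + 1) : (interGraph n a b).Adj (j r) (j s) := by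
  have hlt : j r < j s := hj (by rw [Fin.lt_def]; omega)
  rw [interGraph_adj_iff_of_le hab ha hlt.le]
  refine ⟨hlt.ne, ?_⟩
  by_contra! hgap
  obtain ⟨x, hx, hxr⟩ : j r ∈ Subtype.val '' cc.supp := hC ▸ mem_range_self r
  obtain ⟨y, hy, hys⟩ : j s ∈ Subtype.val '' cc.supp := hC ▸ mem_range_self s
  obtain ⟨walk⟩ := SimpleGraph.ConnectedComponent.exact
    (((cc.mem_supp_iff x).1 hx).trans ((cc.mem_supp_iff y).1 hy).symm)
  obtain ⟨d, -, hd₁, hd₂⟩ := walk.exists_boundary_dart {z | z ∈ cc.supp → z.val ≤ j r}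
    (fun _ => hxr.le) (fun h => (h hy).not_gt (hys ▸ hlt))
  simp only [mem_ofPred_eq, Classical.not_imp, not_le] at hd₁ hd₂
  have hfst : d.fst.val ≤ j r := hd₁ ((cc.mem_supp_congr_adj d.adj).2 hd₂.1)
  obtain ⟨m, hm⟩ : d.snd.val ∈ range j := hC ▸ mem_image_of_mem _ hd₂.1
  have hsm : j s ≤ d.snd.val := by
    rw [← hm]
    refine hj.monotone ?_
    have hrm : r < m := hj.lt_iff_lt.1 (hm ▸ hd₂.2)
    rw [Fin.lt_def] at hrm
    rw [Fin.le_def]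
    omega
  have hadj : (interGraph n a b).Adj d.fst.val d.snd.val := d.adj
  rw [interGraph_adj_iff_of_le hab ha (hfst.trans hd₂.2.le)] at hadj
  exact (((ha hsm).trans hadj.2).trans (hb hfst)).not_gt hgap

theorem notMem_Ioo_of_succ (hab : ∀ i, a i ≤ b i) (ha : Monotone a) (hb : Monotone b)
    (hj : StrictMono j) (hC : range j = Subtype.val '' cc.supp) {r s : Fin p}
    (hrs : (s : ℕ) = r + 1) {w : Fin n} (hw : w ∈ U) : w ∉ Ioo (j r) (j s) := by
  rintro ⟨hrw, hws⟩
  obtain ⟨m, rfl⟩ := mem_range_of_adj hC hw (interGraph_adj_of_le_of_le_left hab ha hrw.le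
    hws.le hrw.ne (adj_of_succ hab ha hb hj hC hrs))
  rw [hj.lt_iff_lt, Fin.lt_def] at hrw hws
  omega

theorem exists_eq_of_le_of_le (hab : ∀ i, a i ≤ b i) (ha : Monotone a) (hb : Monotone b)
    (hj : StrictMono j) (hC : range j = Subtype.val '' cc.supp) {w : Fin n} (hw : w ∈ U)
    {l u : Fin p} (hl : j l ≤ w) (hu : w ≤ j u) : ∃ m, l ≤ m ∧ m ≤ u ∧ j m = w := by
  by_cases hmem : w ∈ range j
  · obtain ⟨m, rfl⟩ := hmem
    exact ⟨m, hj.le_iff_le.1 hl, hj.le_iff_le.1 hu, rfl⟩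
  · obtain ⟨r, s, hrs, hrsw⟩ := hj.monotone.exists_succ_mem_Ioo_of_notMem_range hl hu hmem
    exact absurd hrsw (notMem_Ioo_of_succ hab ha hb hj hC hrs hw)

end Component

section Window

variable {V : Type*} {p : ℕ}

def windowNeighbors (G : SimpleGraph V) (j : Fin p → V) (i : V) (lo hi : ℕ) : Set (Fin p) :=
  {m | lo ≤ m ∧ m < hi ∧ G.Adj i (j m)}

variable {G : SimpleGraph V} {j : Fin p → V} {i : V} {lo hi k : ℕ}

theorem le_ncard_windowNeighbors_of_Icc (hj : Function.Injective j) {l u : Fin p}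
    (hl : lo ≤ l) (hu : (u : ℕ) < hi) (hlu : (l : ℕ) + k = u)
    (h : ∀ m, l ≤ m → m ≤ u → j m ≠ i → G.Adj i (j m)) :
    k ≤ (windowNeighbors G j i lo hi).ncard := by
  have hsub : (Finset.Icc l u : Set (Fin p)) \ j ⁻¹' {i} ⊆ windowNeighbors G j i lo hi := by
    rintro m ⟨hm, hmi⟩
    rw [Finset.coe_Icc] at hm
    exact ⟨hl.trans hm.1, (Fin.le_def.1 hm.2).trans_lt hu, h m hm.1 hm.2 hmi⟩
  have hfib : (j ⁻¹' {i}).ncard ≤ 1 :=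
    ncard_le_one_iff_subsingleton.2 (subsingleton_singleton.preimage hj)
  calc k ≤ (Finset.Icc l u : Set (Fin p)).ncard - (j ⁻¹' {i}).ncard := by
        rw [ncard_coe_finset, Fin.card_Icc]; omega
    _ ≤ _ := le_ncard_sdiff _ _
    _ ≤ _ := ncard_le_ncard hsub

theorem le_ncard_windowNeighbors_of_forall_adj {U : Set V} {l u : Fin p} (hl : lo ≤ l)
    (hu : (u : ℕ) < hi) (hN : ∀ w ∈ U, G.Adj i w → ∃ m, l ≤ m ∧ m ≤ u ∧ j m = w)
    (hdom : k ≤ {w | w ∈ U ∧ G.Adj i w}.ncard) :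
    k ≤ (windowNeighbors G j i lo hi).ncard := by
  refine hdom.trans ((ncard_le_ncard ?_).trans (ncard_image_le (f := j)))
  rintro w ⟨hwU, hiw⟩
  obtain ⟨m, hlm, hmu, rfl⟩ := hN w hwU hiw
  exact ⟨m, ⟨hl.trans hlm, (Fin.le_def.1 hmu).trans_lt hu, hiw⟩, rfl⟩

end Window

/-- For a component of G[U] (U a total k-dominating set) with intervals
I_{j 0} < ... < I_{j (p-1)}, p ≥ 2k, and a window of 2k consecutive intervals
starting at position q, every interval between the two middle intervals of the
window intersects at least k intervals of the window other than itself. -/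
theorem stmt_12 (n k p : ℕ) (hk : 0 < k) (a b : Fin n → ℝ) (hab : ∀ i, a i ≤ b i)
    (hmono : StrictMono a)
    (hproper : ∀ i j : Fin n, i ≠ j →
      ¬(Set.Icc (a i) (b i) ⊆ Set.Icc (a j) (b j)))
    (U : Set (Fin n))
    (htd : ∀ v : Fin n, k ≤ {w | w ∈ U ∧ (interGraph n a b).Adj v w}.ncard)
    (j : Fin p → Fin n) (hjmono : StrictMono j)
    (hC : ∃ cc : ((interGraph n a b).induce U).ConnectedComponent,
      Set.range j = Subtype.val '' cc.supp)
    (q : ℕ) (hq : q + 2 * k ≤ p) :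
    ∀ i : Fin n, j ⟨q + k - 1, by omega⟩ ≤ i → i ≤ j ⟨q + k, by omega⟩ →
      k ≤ {m : Fin p | q ≤ (m : ℕ) ∧ (m : ℕ) < q + 2 * k ∧ j m ≠ i ∧
        (Set.Icc (a i) (b i) ∩ Set.Icc (a (j m)) (b (j m))).Nonempty}.ncard := by
  obtain ⟨cc, hC⟩ := hC
  have ha := hmono.monotone
  have hb : Monotone b := monotone_right_of_proper ha hproper
  intro i hi₁ hi₂
  have hmid := adj_of_succ hab ha hb hjmono hC (r := ⟨q + k - 1, by omega⟩)
    (s := ⟨q + k, by omega⟩) (by dsimp only; omega)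
  suffices k ≤ (windowNeighbors (interGraph n a b) j i q (q + 2 * k)).ncard by
    convert this using 3
    simp only [windowNeighbors, interGraph, ne_comm]
  by_cases hleft : ∃ w, (interGraph n a b).Adj i w ∧ w < j ⟨q, by omega⟩
  · obtain ⟨w, hiw, hw⟩ := hleft
    exact le_ncard_windowNeighbors_of_Icc hjmono.injective (l := ⟨q, by omega⟩)
      (u := ⟨q + k, by omega⟩) le_rfl (by dsimp only; omega) rfl
      (forall_adj_of_neighbor_le hab ha hb hjmono.monotone (by dsimp only; omega) hmid hi₁ hi₂
        hiw hw.le)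
  by_cases hright : ∃ w, (interGraph n a b).Adj i w ∧ j ⟨q + 2 * k - 1, by omega⟩ < w
  · obtain ⟨w, hiw, hw⟩ := hright
    exact le_ncard_windowNeighbors_of_Icc hjmono.injective (l := ⟨q + k - 1, by omega⟩)
      (u := ⟨q + 2 * k - 1, by omega⟩) (by dsimp only; omega) (by dsimp only; omega)
      (by dsimp only; omega)
      (forall_adj_of_neighbor_ge hab ha hjmono.monotone (by dsimp only; omega) hmid hi₁ hi₂ hiw
        hw.le)
  push Not at hleft hright
  exact le_ncard_windowNeighbors_of_forall_adj (l := ⟨q, by omega⟩)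
    (u := ⟨q + 2 * k - 1, by omega⟩) le_rfl (by dsimp only; omega)
    (fun w hw hiw => exists_eq_of_le_of_le hab ha hb hjmono hC hw (hleft w hiw) (hright w hiw))
    (htd i)
end

section
/- Let G be a proper interval graph with intervals ordered by left endpoints and let U be a k-dominating set of G. Let u ∉ U be a vertex with interval I, and suppose all intervals of U are strictly to the right of I in the left-endpoint order, with I disjoint from the leftmost interval of U. Then there is no such vertex u; i.e., every vertex whose interval lies strictly to the left of, and disjoint from, all intervals of U leads to a contradiction. Equivalently: if u ∉ U and I^+ denotes the leftmost interval of U to the right of I, then I intersects the k leftmost intervals of U that are ≥ I^+, provided every interval of U is ≥ I^+. -/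
lemma lt_of_Icc_inter_Icc_eq_empty {α : Type*} [LinearOrder α] {a₁ b₁ a₂ b₂ : α}
    (ha : a₁ ≤ a₂) (h₂ : a₂ ≤ b₂) (h : Set.Icc a₁ b₁ ∩ Set.Icc a₂ b₂ = ∅) : b₁ < a₂ := by
  by_contra! hle
  exact (Set.eq_empty_iff_forall_notMem.mp h) a₂ ⟨⟨ha, hle⟩, ⟨le_rfl, h₂⟩⟩

lemma interGraph_not_adj_of_lt {n : ℕ} {a b : Fin n → ℝ} {v w : Fin n} (h : b v < a w) :
    ¬(interGraph n a b).Adj v w := by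
  rintro ⟨-, x, hxv, hxw⟩
  linarith [hxv.2, hxw.1]

theorem stmt_15_general (n k : ℕ) (hk : 0 < k) (a b : Fin n → ℝ) (hab : ∀ i, a i ≤ b i)
    (hmono : StrictMono a)
    (U : Set (Fin n))
    (hdom : ∀ v : Fin n, v ∉ U →
      k ≤ {w | w ∈ U ∧ (interGraph n a b).Adj v w}.ncard)
    (u : Fin n) (hu : u ∉ U) (hright : ∀ w ∈ U, u < w)
    (w0 : Fin n) (hw0 : w0 ∈ U) (hw0min : ∀ w ∈ U, w0 ≤ w)
    (hdisj : Set.Icc (a u) (b u) ∩ Set.Icc (a w0) (b w0) = ∅) :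
    False := by
  have hbu : b u < a w0 :=
    lt_of_Icc_inter_Icc_eq_empty (hmono.monotone (hright w0 hw0).le) (hab w0) hdisj
  have hno_nbr : {w | w ∈ U ∧ (interGraph n a b).Adj u w} = ∅ :=
    Set.eq_empty_iff_forall_notMem.mpr fun w ⟨hw, hadj⟩ =>
      interGraph_not_adj_of_lt (hbu.trans_le (hmono.monotone (hw0min w hw))) hadj
  have := hdom u hu
  rw [hno_nbr, Set.ncard_empty] at this
  omega

/-- If U is a k-dominating set and u ∉ U is a vertex whose interval lies strictly
to the left of all intervals of U and is disjoint from the leftmost interval of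
U, we get a contradiction. -/
theorem stmt_15 (n k : ℕ) (hk : 0 < k) (a b : Fin n → ℝ) (hab : ∀ i, a i ≤ b i)
    (hmono : StrictMono a)
    (hproper : ∀ i j : Fin n, i ≠ j →
      ¬(Set.Icc (a i) (b i) ⊆ Set.Icc (a j) (b j)))
    (U : Set (Fin n))
    (hdom : ∀ v : Fin n, v ∉ U →
      k ≤ {w | w ∈ U ∧ (interGraph n a b).Adj v w}.ncard)
    (u : Fin n) (hu : u ∉ U) (hright : ∀ w ∈ U, u < w)
    (w0 : Fin n) (hw0 : w0 ∈ U) (hw0min : ∀ w ∈ U, w0 ≤ w)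
    (hdisj : Set.Icc (a u) (b u) ∩ Set.Icc (a w0) (b w0) = ∅) :
    False :=
  stmt_15_general n k hk a b hab hmono U hdom u hu hright w0 hw0 hw0min hdisj
end
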